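/- arXiv:1011.3319 — 4 statements merged into one kernel-verified Lean document; each statement's English description precedes it below -/
import Mathlib

section
/- Fix n ≥ 1, γ ∈ ℝ^{k+1}, and a bound M > 0. Let x_1, …, x_n ∈ ℝ^k be fixed presence covariates and let x_{n+1}, x_{n+2}, … ∈ ℝ^k be an infinite sequence of pseudo-absence covariates, all with ‖x_i‖ ≤ M. For each m > n, form l_bin(γ; m) from the points 1, …, m and form l_ppm(γ − J_m; 1) with all m weights equal to 1. Then there exist a constant C > 0 and m_0 such that for all m ≥ m_0, |l_bin(γ; m) − l_ppm(γ − J_m; 1)| ≤ C/m; that is, the logistic regression log-likelihood equals the unit-weight Poisson point-process log-likelihood evaluated at γ − J_m, up to an error of order O(m^{-1}). -/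
open Real Finset Filter

noncomputable section

/-- The intensity `λ_i(β) = exp(β_0 + Σ_{j=1}^k x_{ij} β_j)`. -/
def lam {k : ℕ} (x : ℕ → Fin k → ℝ) (β : Fin (k + 1) → ℝ) (i : ℕ) : ℝ :=
  Real.exp (β 0 + ∑ j : Fin k, x i j * β j.succ)

/-- The weighted Poisson point-process log-likelihood
`l_ppm(β; w) = Σ_{i=1}^n log λ_i(β) − Σ_{i=1}^m w_i λ_i(β)`
(points are indexed `0, …, m-1`, the presences being `0, …, n-1`). -/
def lppm {k : ℕ} (n m : ℕ) (x : ℕ → Fin k → ℝ) (w : ℕ → ℝ) (β : Fin (k + 1) → ℝ) : ℝ :=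
  (∑ i ∈ Finset.range n, Real.log (lam x β i)) - ∑ i ∈ Finset.range m, w i * lam x β i

/-- The vector `J_c = (log c, 0, …, 0) ∈ ℝ^{k+1}`. -/
def Jvec {k : ℕ} (c : ℝ) : Fin (k + 1) → ℝ := fun j => if j = 0 then Real.log c else 0


/-! With `c = m - n` and `a_i = λ_i(γ)`, the logit model gives `p_i = a_i / (c + a_i)`, so
`l_bin(γ; m) - l_ppm(γ - J_m; 1) = n log (m / c) + Σ_{i<m} (a_i / m - log (1 + a_i / c))` exactly.
Bounded covariates make the `a_i` uniformly bounded; since `log (1 + r) = r + O(r²)` and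
`1/c - 1/m = O(m⁻²)`, each of the `m` summands is `O(m⁻²)`, and `n log (m / c) = O(m⁻¹)`. -/

namespace Real

lemma abs_sub_log_one_add_le_sq {r : ℝ} (hr : 0 ≤ r) : |r - log (1 + r)| ≤ r ^ 2 := by
  have h1r : 0 < 1 + r := by linarith
  have hupper : log (1 + r) ≤ r := by linarith [log_le_sub_one_of_pos h1r]
  have hlower : r - r ^ 2 ≤ 1 - (1 + r)⁻¹ := by
    rw [← sub_nonneg]
    have : 1 - (1 + r)⁻¹ - (r - r ^ 2) = r ^ 3 / (1 + r) := by field_simp; ring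
    rw [this]; positivity
  rw [abs_le]
  constructor <;> linarith [one_sub_inv_le_log_of_pos h1r, sq_nonneg r]

lemma abs_log_sub_log_le {c m : ℝ} (hc : 0 < c) (hcm : c ≤ m) (hm : m ≤ 2 * c) :
    |log m - log c| ≤ 2 * (m - c) / m := by
  have hm0 : 0 < m := hc.trans_le hcm
  rw [← log_div hm0.ne' hc.ne', abs_of_nonneg (log_nonneg ((one_le_div hc).2 hcm))]
  calc log (m / c) ≤ m / c - 1 := log_le_sub_one_of_pos (by positivity)
    _ = (m - c) / c := by field_simp
    _ ≤ 2 * (m - c) / m := by rw [div_le_div_iff₀ hc hm0]; nlinarith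

lemma abs_div_sub_log_one_add_div_le {a c m : ℝ} (ha : 0 ≤ a) (hc : 0 < c) (hcm : c ≤ m)
    (hm : m ≤ 2 * c) :
    |a / m - log (1 + a / c)| ≤ 2 * (a * (m - c) + 2 * a ^ 2) / m ^ 2 := by
  have hm0 : 0 < m := hc.trans_le hcm
  have hinv : 1 / c ≤ 2 / m := by rw [div_le_div_iff₀ hc hm0]; linarith
  have hshift : |a / m - a / c| ≤ 2 * a * (m - c) / m ^ 2 := by
    have : a / c - a / m = a * (m - c) * (1 / m) * (1 / c) := by field_simp
    rw [abs_sub_comm, abs_of_nonneg (by rw [this]; have := sub_nonneg.2 hcm; positivity), this]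
    calc a * (m - c) * (1 / m) * (1 / c) ≤ a * (m - c) * (1 / m) * (2 / m) := by gcongr
      _ = 2 * a * (m - c) / m ^ 2 := by field_simp
  have hsq : (a / c) ^ 2 ≤ 4 * a ^ 2 / m ^ 2 := by
    calc (a / c) ^ 2 = (a * (1 / c)) ^ 2 := by ring
      _ ≤ (a * (2 / m)) ^ 2 := by gcongr
      _ = 4 * a ^ 2 / m ^ 2 := by ring
  calc |a / m - log (1 + a / c)|
        = |(a / m - a / c) + (a / c - log (1 + a / c))| := by rw [sub_add_sub_cancel]
    _ ≤ |a / m - a / c| + |a / c - log (1 + a / c)| := abs_add_le _ _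
    _ ≤ 2 * a * (m - c) / m ^ 2 + 4 * a ^ 2 / m ^ 2 :=
      add_le_add hshift ((abs_sub_log_one_add_le_sq (by positivity)).trans hsq)
    _ = 2 * (a * (m - c) + 2 * a ^ 2) / m ^ 2 := by ring

lemma log_eq_and_log_one_sub_eq_of_log_odds_eq {q r : ℝ} (hq : q ∈ Set.Ioo 0 1) (hr : 0 < r)
    (h : log (q / (1 - q)) = log r) : log q = log r - log (1 + r) ∧ log (1 - q) = -log (1 + r) := by
  obtain ⟨hq0, hq1⟩ := hq
  have hodds : q / (1 - q) = r :=
    log_injOn_pos (div_pos hq0 (sub_pos.2 hq1)) (Set.mem_Ioi.2 hr) h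
  have hq : q = r / (1 + r) := by
    rw [eq_div_iff (by positivity), ← hodds]
    field_simp [(sub_pos.2 hq1).ne']
    ring
  have h1q : 1 - q = (1 + r)⁻¹ := by
    rw [hq]
    field_simp
    ring
  exact ⟨by rw [hq, log_div hr.ne' (by positivity)], by rw [h1q, log_inv]⟩

end Real

lemma lam_pos {k : ℕ} (x : ℕ → Fin k → ℝ) (β : Fin (k + 1) → ℝ) (i : ℕ) : 0 < lam x β i :=
  exp_pos _

lemma log_lam {k : ℕ} (x : ℕ → Fin k → ℝ) (β : Fin (k + 1) → ℝ) (i : ℕ) :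
    log (lam x β i) = β 0 + ∑ j : Fin k, x i j * β j.succ :=
  log_exp _

lemma lam_sub_Jvec {k : ℕ} (x : ℕ → Fin k → ℝ) (β : Fin (k + 1) → ℝ) (i : ℕ) {c : ℝ}
    (hc : 0 < c) : lam x (β - Jvec c) i = lam x β i / c := by
  simp only [lam, Jvec, Pi.sub_apply, if_true, Fin.succ_ne_zero, if_false, sub_zero]
  rw [sub_add_eq_add_sub, exp_sub, exp_log hc]

lemma lam_le_of_norm_le {k : ℕ} {x : ℕ → Fin k → ℝ} {M : ℝ} {i : ℕ} (hx : ‖x i‖ ≤ M)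
    (β : Fin (k + 1) → ℝ) : lam x β i ≤ exp (|β 0| + M * ∑ j : Fin k, |β j.succ|) := by
  refine exp_le_exp.2 (add_le_add (le_abs_self _) ?_)
  rw [mul_sum]
  refine sum_le_sum fun j _ => ?_
  calc x i j * β j.succ ≤ |x i j| * |β j.succ| := (le_abs_self _).trans (abs_mul _ _).le
    _ ≤ M * |β j.succ| := by gcongr; exact (norm_le_pi_norm (x i) j).trans hx

lemma lbin_sub_lppm_eq {k n m : ℕ} (hnm : n < m) (x : ℕ → Fin k → ℝ) (γ : Fin (k + 1) → ℝ)
    {p : ℕ → ℝ} (hp01 : ∀ i < m, p i ∈ Set.Ioo (0 : ℝ) 1)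
    (hodds : ∀ i < m, log (p i / (1 - p i)) = log (lam x γ i / ((m : ℝ) - n))) :
    ((∑ i ∈ range n, log (p i)) + ∑ i ∈ Ico n m, log (1 - p i)) -
        lppm n m x (fun _ => 1) (γ - Jvec (m : ℝ)) =
      n * (log m - log ((m : ℝ) - n)) +
        ∑ i ∈ range m, (lam x γ i / m - log (1 + lam x γ i / ((m : ℝ) - n))) := by
  set c : ℝ := (m : ℝ) - n
  have hc : 0 < c := sub_pos.2 (by exact_mod_cast hnm)
  have hm : (0 : ℝ) < m := by exact_mod_cast (Nat.zero_le n).trans_lt hnm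
  have hlogs : ∀ i < m, log (p i) = log (lam x γ i / c) - log (1 + lam x γ i / c) ∧
      log (1 - p i) = -log (1 + lam x γ i / c) := fun i hi =>
    log_eq_and_log_one_sub_eq_of_log_odds_eq (hp01 i hi) (div_pos (lam_pos x γ i) hc) (hodds i hi)
  have hlogp : ∀ i ∈ range n, log (p i) = log (lam x γ i) - log c - log (1 + lam x γ i / c) :=
    fun i hi => by
      rw [(hlogs i ((mem_range.1 hi).trans hnm)).1, log_div (lam_pos x γ i).ne' hc.ne']
  have hlog1p : ∀ i ∈ Ico n m, log (1 - p i) = -log (1 + lam x γ i / c) :=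
    fun i hi => (hlogs i (mem_Ico.1 hi).2).2
  have hppm : lppm n m x (fun _ => 1) (γ - Jvec (m : ℝ)) =
      ∑ i ∈ range n, (log (lam x γ i) - log m) - ∑ i ∈ range m, lam x γ i / m := by
    simp only [lppm, one_mul, lam_sub_Jvec x γ _ hm, log_div (lam_pos x γ _).ne' hm.ne']
  rw [sum_congr rfl hlogp, sum_congr rfl hlog1p, hppm]
  simp only [sum_sub_distrib, sum_neg_distrib, sum_const, card_range, nsmul_eq_mul]
  rw [← sum_range_add_sum_Ico (fun i => log (1 + lam x γ i / c)) hnm.le]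
  ring

lemma abs_logistic_sub_poisson_le {n m : ℕ} (hnm : 2 * n < m) {a : ℕ → ℝ} {B : ℝ}
    (ha : ∀ i, 0 ≤ a i) (haB : ∀ i, a i ≤ B) :
    |n * (log m - log ((m : ℝ) - n)) + ∑ i ∈ range m, (a i / m - log (1 + a i / ((m : ℝ) - n)))|
      ≤ 2 * (n ^ 2 + B * n + 2 * B ^ 2) / m := by
  have hnm' : 2 * (n : ℝ) < m := by exact_mod_cast hnm
  have hn : (0 : ℝ) ≤ n := n.cast_nonneg
  have hc : (0 : ℝ) < m - n := by linarith
  have hcm : (m : ℝ) - n ≤ m := by linarith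
  have hm2 : (m : ℝ) ≤ 2 * (m - n) := by linarith
  have hm : (0 : ℝ) < m := by linarith
  have hlog : |n * (log m - log ((m : ℝ) - n))| ≤ n * (2 * n / m) := by
    rw [abs_mul, abs_of_nonneg hn]
    gcongr
    simpa only [sub_sub_cancel] using abs_log_sub_log_le hc hcm hm2
  have hsum : |∑ i ∈ range m, (a i / m - log (1 + a i / ((m : ℝ) - n)))|
      ≤ m * (2 * (B * n + 2 * B ^ 2) / m ^ 2) := by
    calc _ ≤ ∑ i ∈ range m, |a i / m - log (1 + a i / ((m : ℝ) - n))| := abs_sum_le_sum_abs _ _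
      _ ≤ ∑ _i ∈ range m, 2 * (B * n + 2 * B ^ 2) / m ^ 2 := by
        refine sum_le_sum fun i _ => (abs_div_sub_log_one_add_div_le (ha i) hc hcm hm2).trans ?_
        rw [sub_sub_cancel]
        have := ha i
        gcongr <;> exact haB i
      _ = m * (2 * (B * n + 2 * B ^ 2) / m ^ 2) := by rw [sum_const, card_range, nsmul_eq_mul]
  calc _ ≤ _ := abs_add_le _ _
    _ ≤ n * (2 * n / m) + m * (2 * (B * n + 2 * B ^ 2) / m ^ 2) := add_le_add hlog hsum
    _ = 2 * (n ^ 2 + B * n + 2 * B ^ 2) / m := by field_simp; ring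

theorem stmt_0_general {k : ℕ} (n : ℕ) (γ : Fin (k + 1) → ℝ) (M : ℝ)
    (x : ℕ → Fin k → ℝ) (hx : ∀ i, ‖x i‖ ≤ M)
    (p : ℕ → ℕ → ℝ)
    (hp01 : ∀ m, n < m → ∀ i < m, p m i ∈ Set.Ioo (0 : ℝ) 1)
    (hlogit : ∀ m, n < m → ∀ i < m,
      Real.log (p m i / (1 - p m i)) =
        γ 0 - Real.log ((m : ℝ) - n) + ∑ j : Fin k, x i j * γ j.succ) :
    ∃ C > (0 : ℝ), ∃ m₀ : ℕ, n < m₀ ∧ ∀ m ≥ m₀,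
      |((∑ i ∈ Finset.range n, Real.log (p m i)) +
            ∑ i ∈ Finset.Ico n m, Real.log (1 - p m i)) -
          lppm n m x (fun _ => 1) (γ - Jvec (m : ℝ))| ≤ C / m := by
  set B := exp (|γ 0| + M * ∑ j : Fin k, |γ j.succ|)
  refine ⟨2 * (n ^ 2 + B * n + 2 * B ^ 2), by positivity, 2 * n + 1, by omega, fun m hm => ?_⟩
  have hnm : n < m := by omega
  have hc : (0 : ℝ) < m - n := sub_pos.2 (by exact_mod_cast hnm)
  rw [lbin_sub_lppm_eq hnm x γ (hp01 m hnm) fun i hi => ?_]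
  · exact abs_logistic_sub_poisson_le (by omega) (fun i => (lam_pos x γ i).le)
      fun i => lam_le_of_norm_le (hx i) γ
  · rw [hlogit m hnm i hi, log_div (lam_pos x γ i).ne' hc.ne', log_lam]
    ring

/-- Theorem 1 of Warton & Shepherd (2010): with `n` fixed presence covariates and an
infinite sequence of pseudo-absence covariates, all bounded in norm by `M`, the
pseudo-absence logistic log-likelihood
`l_bin(γ; m) = Σ_{i=1}^n log p_i + Σ_{i=n+1}^m log(1 − p_i)`
(where `log(p_i/(1−p_i)) = γ_0 − log(m−n) + Σ_j x_{ij} γ_j`) equals the unit-weight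
Poisson point-process log-likelihood `l_ppm(γ − J_m; 1)` up to an error of order
`O(m^{-1})`: there are `C > 0` and `m₀` with
`|l_bin(γ; m) − l_ppm(γ − J_m; 1)| ≤ C/m` for all `m ≥ m₀`. -/
theorem stmt_0 {k : ℕ} (n : ℕ) (hn : 1 ≤ n) (γ : Fin (k + 1) → ℝ) (M : ℝ) (hM : 0 < M)
    (x : ℕ → Fin k → ℝ) (hx : ∀ i, ‖x i‖ ≤ M)
    (p : ℕ → ℕ → ℝ)
    (hp01 : ∀ m, n < m → ∀ i < m, p m i ∈ Set.Ioo (0 : ℝ) 1)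
    (hlogit : ∀ m, n < m → ∀ i < m,
      Real.log (p m i / (1 - p m i)) =
        γ 0 - Real.log ((m : ℝ) - n) + ∑ j : Fin k, x i j * γ j.succ) :
    ∃ C > (0 : ℝ), ∃ m₀ : ℕ, n < m₀ ∧ ∀ m ≥ m₀,
      |((∑ i ∈ Finset.range n, Real.log (p m i)) +
            ∑ i ∈ Finset.Ico n m, Real.log (1 - p m i)) -
          lppm n m x (fun _ => 1) (γ - Jvec (m : ℝ))| ≤ C / m :=
  stmt_0_general n γ M x hx p hp01 hlogit
end
end

section
/- Fix 0 < n < m, covariates x_1, …, x_m ∈ ℝ^k, and a constant |A| > 0, and set the common weight c = |A|/m. Suppose the m × (k+1) design matrix X whose i-th row is (1, x_{i1}, …, x_{ik}) has full column rank k+1. If γ̂ ∈ ℝ^{k+1} maximizes the function γ ↦ l_ppm(γ − J_m; 1) (all weights equal to 1) over ℝ^{k+1}, and β̂ ∈ ℝ^{k+1} maximizes β ↦ l_ppm(β; c·1) (all weights equal to |A|/m) over ℝ^{k+1}, then γ̂ = β̂ + J_{|A|}. In particular, all slope coordinates agree, γ̂_j = β̂_j for j = 1, …, k, and the intercepts differ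 by log|A|. -/
open Real Finset Filter

noncomputable section

/-- The design matrix `X` whose `i`-th row is `(1, x_{i1}, …, x_{ik})`. -/
def designMatrix {k : ℕ} (m : ℕ) (x : ℕ → Fin k → ℝ) : Matrix (Fin m) (Fin (k + 1)) ℝ :=
  Matrix.of fun i j => (Fin.cons (1 : ℝ) (x i.val) : Fin (k + 1) → ℝ) j

/-- The linear predictor. -/
def gfun {k : ℕ} (x : ℕ → Fin k → ℝ) (i : ℕ) (β : Fin (k + 1) → ℝ) : ℝ :=
  β 0 + ∑ j : Fin k, x i j * β j.succ

lemma lam_eq_exp_gfun {k : ℕ} (x : ℕ → Fin k → ℝ) (β : Fin (k + 1) → ℝ) (i : ℕ) :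
    lam x β i = Real.exp (gfun x i β) := rfl

lemma gfun_shift {k : ℕ} (x : ℕ → Fin k → ℝ) (c : ℝ) (β : Fin (k + 1) → ℝ) (i : ℕ) :
    gfun x i (β + Jvec c) = gfun x i β + Real.log c := by
  simp [gfun, Jvec, Fin.succ_ne_zero]
  ring

lemma lam_shift {k : ℕ} (x : ℕ → Fin k → ℝ) {c : ℝ} (hc : 0 < c) (β : Fin (k + 1) → ℝ)
    (i : ℕ) : lam x (β + Jvec c) i = c * lam x β i := by
  rw [lam_eq_exp_gfun, gfun_shift, Real.exp_add, Real.exp_log hc, lam_eq_exp_gfun]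
  ring

lemma lppm_shift {k : ℕ} (n m : ℕ) (x : ℕ → Fin k → ℝ) {c : ℝ} (hc : 0 < c)
    (β : Fin (k + 1) → ℝ) :
    lppm n m x (fun _ => c) β = lppm n m x (fun _ => 1) (β + Jvec c) - n * Real.log c := by
  unfold lppm
  have h1 : ∀ i : ℕ, Real.log (lam x (β + Jvec c) i) = Real.log (lam x β i) + Real.log c := by
    intro i
    rw [lam_shift x hc,
      Real.log_mul (ne_of_gt hc) (by rw [lam_eq_exp_gfun]; exact Real.exp_ne_zero _), add_comm]
  have h2 : (∑ i ∈ Finset.range n, Real.log (lam x (β + Jvec c) i))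
      = (∑ i ∈ Finset.range n, Real.log (lam x β i)) + n * Real.log c := by
    simp [h1, Finset.sum_add_distrib]
  have h3 : (∑ i ∈ Finset.range m, (1 : ℝ) * lam x (β + Jvec c) i)
      = ∑ i ∈ Finset.range m, c * lam x β i := by
    refine Finset.sum_congr rfl fun i _ => ?_
    rw [one_mul, lam_shift x hc]
  rw [h2, h3]
  ring

lemma exp_midpoint_le (u v : ℝ) :
    Real.exp ((u + v) / 2) ≤ (Real.exp u + Real.exp v) / 2 := by
  have h := convexOn_exp.2 (Set.mem_univ u) (Set.mem_univ v)
    (by norm_num : (0:ℝ) ≤ 1/2) (by norm_num : (0:ℝ) ≤ 1/2) (by norm_num)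
  simp only [smul_eq_mul] at h
  calc Real.exp ((u + v) / 2) = Real.exp (1/2 * u + 1/2 * v) := by ring_nf
    _ ≤ 1/2 * Real.exp u + 1/2 * Real.exp v := h
    _ = (Real.exp u + Real.exp v) / 2 := by ring

lemma exp_midpoint_lt {u v : ℝ} (huv : u ≠ v) :
    Real.exp ((u + v) / 2) < (Real.exp u + Real.exp v) / 2 := by
  have h := strictConvexOn_exp.2 (Set.mem_univ u) (Set.mem_univ v) huv
    (by norm_num : (0:ℝ) < 1/2) (by norm_num : (0:ℝ) < 1/2) (by norm_num)
  simp only [smul_eq_mul] at h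
  calc Real.exp ((u + v) / 2) = Real.exp (1/2 * u + 1/2 * v) := by ring_nf
    _ < 1/2 * Real.exp u + 1/2 * Real.exp v := h
    _ = (Real.exp u + Real.exp v) / 2 := by ring

lemma gfun_midpoint {k : ℕ} (x : ℕ → Fin k → ℝ) (i : ℕ) (a b : Fin (k + 1) → ℝ) :
    gfun x i (fun j => (a j + b j) / 2) = (gfun x i a + gfun x i b) / 2 := by
  have h : (∑ j : Fin k, x i j * ((a j.succ + b j.succ) / 2))
      = ((∑ j : Fin k, x i j * a j.succ) + ∑ j : Fin k, x i j * b j.succ) / 2 := by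
    rw [← Finset.sum_add_distrib, Finset.sum_div]
    exact Finset.sum_congr rfl fun j _ => by ring
  simp only [gfun, h]
  ring

lemma mulVec_eq_gfun {k m : ℕ} (x : ℕ → Fin k → ℝ) (v : Fin (k + 1) → ℝ) (i : Fin m) :
    (designMatrix m x).mulVec v i = gfun x i.val v := by
  simp only [Matrix.mulVec, dotProduct, designMatrix, Matrix.of_apply, gfun]
  rw [Fin.sum_univ_succ]
  simp

lemma mulVec_inj {m k : ℕ} (M : Matrix (Fin m) (Fin (k + 1)) ℝ)
    (h : M.rank = k + 1) : Function.Injective M.mulVec := by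
  have h1 := LinearMap.finrank_range_add_finrank_ker M.mulVecLin
  rw [Matrix.rank] at h
  simp only [Module.finrank_pi, Fintype.card_fin] at h1
  rw [h] at h1
  have hker : Module.finrank ℝ (LinearMap.ker M.mulVecLin) = 0 := by omega
  have hbot : LinearMap.ker M.mulVecLin = ⊥ := Submodule.finrank_eq_zero.mp hker
  have hinj : Function.Injective M.mulVecLin := LinearMap.ker_eq_bot.mp hbot
  intro u v huv
  apply hinj
  simpa [Matrix.mulVecLin_apply] using huv

/-- If the design matrix has full column rank, `γ̂` maximizes the unit-weight likelihood
`γ ↦ l_ppm(γ − J_m; 1)` and `β̂` maximizes the equally-weighted likelihood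
`β ↦ l_ppm(β; (|A|/m)·1)`, then `γ̂ = β̂ + J_{|A|}`: the slope coordinates agree and
the intercepts differ by `log|A|`. -/
theorem stmt_1 {k : ℕ} (n m : ℕ) (hn : 0 < n) (hnm : n < m)
    (x : ℕ → Fin k → ℝ) (A : ℝ) (hA : 0 < A)
    (hrank : (designMatrix m x).rank = k + 1)
    (γhat βhat : Fin (k + 1) → ℝ)
    (hγ : ∀ γ : Fin (k + 1) → ℝ,
      lppm n m x (fun _ => 1) (γ - Jvec (m : ℝ)) ≤
        lppm n m x (fun _ => 1) (γhat - Jvec (m : ℝ)))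
    (hβ : ∀ β : Fin (k + 1) → ℝ,
      lppm n m x (fun _ => A / m) β ≤ lppm n m x (fun _ => A / m) βhat) :
    γhat = βhat + Jvec A ∧
      (∀ j : Fin k, γhat j.succ = βhat j.succ) ∧ γhat 0 = βhat 0 + Real.log A := by
  have hm : 0 < m := lt_trans hn hnm
  have hmR : (0:ℝ) < m := by exact_mod_cast hm
  have hc : (0:ℝ) < A / m := div_pos hA hmR
  set f : (Fin (k + 1) → ℝ) → ℝ := lppm n m x (fun _ => 1) with hf
  set a : Fin (k + 1) → ℝ := γhat - Jvec (m : ℝ) with hadef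
  set b : Fin (k + 1) → ℝ := βhat + Jvec (A / m) with hbdef
  -- a maximizes f
  have ha : ∀ β, f β ≤ f a := by
    intro β
    have := hγ (β + Jvec (m : ℝ))
    simpa using this
  -- b maximizes f
  have hb : ∀ β, f β ≤ f b := by
    intro β
    have h1 := hβ (β - Jvec (A / m))
    rw [lppm_shift n m x hc, lppm_shift n m x hc] at h1
    have h2 : β - Jvec (A / m) + Jvec (A / m) = β := by abel
    rw [h2] at h1
    linarith
  have hab : f a = f b := le_antisymm (hb a) (ha b)
  -- f in terms of gfun
  have hfval : ∀ β, f β = (∑ i ∈ Finset.range n, gfun x i β)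
      - ∑ i ∈ Finset.range m, Real.exp (gfun x i β) := by
    intro β
    simp [hf, lppm, lam_eq_exp_gfun, Real.log_exp]
  -- key: gfun agrees on a and b for all i < m
  have hkey : ∀ i ∈ Finset.range m, gfun x i a = gfun x i b := by
    by_contra hcon
    push_neg at hcon
    obtain ⟨i0, hi0, hne⟩ := hcon
    set mid : Fin (k + 1) → ℝ := fun j => (a j + b j) / 2 with hmid
    have hmidle : f mid ≤ f a := ha mid
    have hlin : (∑ i ∈ Finset.range n, gfun x i mid)
        = ((∑ i ∈ Finset.range n, gfun x i a) + ∑ i ∈ Finset.range n, gfun x i b) / 2 := by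
      rw [← Finset.sum_add_distrib, Finset.sum_div]
      exact Finset.sum_congr rfl fun i _ => by
        rw [hmid, gfun_midpoint]
    have hexp : (∑ i ∈ Finset.range m, Real.exp (gfun x i mid))
        < ((∑ i ∈ Finset.range m, Real.exp (gfun x i a))
            + ∑ i ∈ Finset.range m, Real.exp (gfun x i b)) / 2 := by
      rw [← Finset.sum_add_distrib, Finset.sum_div]
      apply Finset.sum_lt_sum
      · intro i _
        rw [hmid, gfun_midpoint]
        exact exp_midpoint_le _ _
      · exact ⟨i0, hi0, by rw [hmid, gfun_midpoint]; exact exp_midpoint_lt hne⟩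
    have hgt : f a < f mid := by
      rw [hfval mid, hfval a]
      have hfb := hfval b
      have : f a = (f a + f b) / 2 := by rw [hab]; ring
      rw [hfval a, hfval b] at this
      rw [show (∑ i ∈ Finset.range n, gfun x i a)
          - ∑ i ∈ Finset.range m, Real.exp (gfun x i a)
          = (((∑ i ∈ Finset.range n, gfun x i a)
              - ∑ i ∈ Finset.range m, Real.exp (gfun x i a))
            + ((∑ i ∈ Finset.range n, gfun x i b)
              - ∑ i ∈ Finset.range m, Real.exp (gfun x i b))) / 2 from by
        rw [hfval a, hfval b] at hab; linarith]
      rw [hlin]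
      linarith
    linarith [hmidle, hgt]
  -- a = b
  have haeqb : a = b := by
    apply mulVec_inj (designMatrix m x) hrank
    funext i
    rw [mulVec_eq_gfun, mulVec_eq_gfun]
    exact hkey i.val (Finset.mem_range.mpr i.isLt)
  -- conclude
  have hJ : Jvec (A / m) + Jvec (m : ℝ) = (Jvec A : Fin (k + 1) → ℝ) := by
    funext j
    simp only [Pi.add_apply, Jvec]
    by_cases hj : j = 0
    · simp [hj, Real.log_div (ne_of_gt hA) (ne_of_gt hmR)]
    · simp [hj]
  have hmain : γhat = βhat + Jvec A := by
    have : γhat - Jvec (m : ℝ) = βhat + Jvec (A / m) := haeqb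
    have h2 : γhat = βhat + Jvec (A / m) + Jvec (m : ℝ) := by
      rw [← this]; abel
    rw [h2, add_assoc, hJ]
  refine ⟨hmain, fun j => ?_, ?_⟩
  · rw [hmain]
    simp [Jvec, Fin.succ_ne_zero]
  · rw [hmain]
    simp [Jvec]
end
end

section
/- Fix n ≥ 1, γ ∈ ℝ^{k+1}, and M > 0. Let x_1, x_2, … ∈ ℝ^k be a sequence of covariate vectors with ‖x_i‖ ≤ M for all i, and for each m > n form the pseudo-absence logistic log-likelihood l_bin(γ; m) from the points 1, …, m. Then l_bin(γ; m) → −∞ as m → ∞; more precisely, there is a constant C such that l_bin(γ; m) ≤ −n log m + C for all sufficiently large m. -/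
open Real Finset Filter

noncomputable section

/-!
Each pseudo-absence term `log (1 - p_i)` is negative and each presence term satisfies
`log p_i ≤ log (p_i / (1 - p_i))`, so `l_bin(γ; m)` is at most the sum of the `n` presence
log-odds. These are `η_i - log (m - n)` with `η_i` independent of `m`, and
`log (m - n) ≥ log m - log 2` once `m ≥ 2n`.
-/

lemma log_le_log_odds {q : ℝ} (hq : q ∈ Set.Ioo (0 : ℝ) 1) : log q ≤ log (q / (1 - q)) := by
  obtain ⟨h0, h1⟩ := hq
  refine log_le_log h0 ?_
  rw [le_div_iff₀ (by linarith)]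
  nlinarith

lemma log_sub_log_two_le_log_sub {a b : ℝ} (ha : 0 < a) (hab : 2 * b ≤ a) :
    log a - log 2 ≤ log (a - b) := by
  rw [← log_div ha.ne' two_ne_zero]
  exact log_le_log (by positivity) (by linarith)

lemma sum_log_add_sum_log_one_sub_le_sum_log_odds {n m : ℕ} (hnm : n ≤ m) {q : ℕ → ℝ}
    (hq : ∀ i < m, q i ∈ Set.Ioo (0 : ℝ) 1) :
    (∑ i ∈ range n, log (q i)) + ∑ i ∈ Ico n m, log (1 - q i) ≤
      ∑ i ∈ range n, log (q i / (1 - q i)) := by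
  have presences : ∑ i ∈ range n, log (q i) ≤ ∑ i ∈ range n, log (q i / (1 - q i)) :=
    sum_le_sum fun i hi => log_le_log_odds (hq i (by grind))
  have absences : ∑ i ∈ Ico n m, log (1 - q i) ≤ 0 :=
    sum_nonpos fun i hi => by
      obtain ⟨h0, h1⟩ := hq i (by grind)
      exact log_nonpos (by linarith) (by linarith)
  linarith

theorem stmt_8_general {k : ℕ} (n : ℕ) (hn : 1 ≤ n) (γ : Fin (k + 1) → ℝ)
    (x : ℕ → Fin k → ℝ)
    (p : ℕ → ℕ → ℝ)
    (hp01 : ∀ m, n < m → ∀ i < m, p m i ∈ Set.Ioo (0 : ℝ) 1)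
    (hlogit : ∀ m, n < m → ∀ i < m,
      Real.log (p m i / (1 - p m i)) =
        γ 0 - Real.log ((m : ℝ) - n) + ∑ j : Fin k, x i j * γ j.succ) :
    Filter.Tendsto
        (fun m : ℕ =>
          (∑ i ∈ Finset.range n, Real.log (p m i)) +
            ∑ i ∈ Finset.Ico n m, Real.log (1 - p m i))
        Filter.atTop Filter.atBot ∧
      ∃ C : ℝ, ∀ᶠ m : ℕ in Filter.atTop,
        (∑ i ∈ Finset.range n, Real.log (p m i)) +
            ∑ i ∈ Finset.Ico n m, Real.log (1 - p m i) ≤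
          -(n : ℝ) * Real.log m + C := by
  set C : ℝ := (∑ i ∈ range n, (γ 0 + ∑ j : Fin k, x i j * γ j.succ)) + n * log 2
  have hbound : ∀ᶠ m : ℕ in atTop,
      (∑ i ∈ range n, log (p m i)) + ∑ i ∈ Ico n m, log (1 - p m i) ≤
        -(n : ℝ) * log m + C := by
    filter_upwards [eventually_ge_atTop (2 * n + 1)] with m hm
    have hnm : n < m := by omega
    have hlog : log m - log 2 ≤ log ((m : ℝ) - n) :=
      log_sub_log_two_le_log_sub (Nat.cast_pos.mpr (by omega))
        (by exact_mod_cast (by omega : 2 * n ≤ m))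
    calc (∑ i ∈ range n, log (p m i)) + ∑ i ∈ Ico n m, log (1 - p m i)
        ≤ ∑ i ∈ range n, log (p m i / (1 - p m i)) :=
          sum_log_add_sum_log_one_sub_le_sum_log_odds hnm.le (hp01 m hnm)
      _ = (∑ i ∈ range n, (γ 0 + ∑ j : Fin k, x i j * γ j.succ)) - n * log ((m : ℝ) - n) := by
          rw [sum_congr rfl fun i hi => hlogit m hnm i (by grind)]
          simp only [sum_add_distrib, sum_sub_distrib, sum_const, card_range, nsmul_eq_mul]
          ring
      _ ≤ -(n : ℝ) * log m + C := by
          have := mul_le_mul_of_nonneg_left hlog n.cast_nonneg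
          linarith
  have hC : Tendsto (fun m : ℕ => -(n : ℝ) * log m + C) atTop atBot :=
    tendsto_atBot_add_const_right _ C <|
      (tendsto_log_atTop.comp tendsto_natCast_atTop_atTop).const_mul_atTop_of_neg
        (by simp only [neg_lt_zero, Nat.cast_pos]; omega)
  exact ⟨tendsto_atBot_mono' _ hbound hC, C, hbound⟩

/-- With covariates bounded in norm by `M`, the pseudo-absence logistic log-likelihood
`l_bin(γ; m) = Σ_{i=1}^n log p_i + Σ_{i=n+1}^m log(1 − p_i)` diverges to `−∞` as
`m → ∞`; more precisely there is a constant `C` with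
`l_bin(γ; m) ≤ −n log m + C` for all sufficiently large `m`. -/
theorem stmt_8 {k : ℕ} (n : ℕ) (hn : 1 ≤ n) (γ : Fin (k + 1) → ℝ) (M : ℝ) (hM : 0 < M)
    (x : ℕ → Fin k → ℝ) (hx : ∀ i, ‖x i‖ ≤ M)
    (p : ℕ → ℕ → ℝ)
    (hp01 : ∀ m, n < m → ∀ i < m, p m i ∈ Set.Ioo (0 : ℝ) 1)
    (hlogit : ∀ m, n < m → ∀ i < m,
      Real.log (p m i / (1 - p m i)) =
        γ 0 - Real.log ((m : ℝ) - n) + ∑ j : Fin k, x i j * γ j.succ) :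
    Filter.Tendsto
        (fun m : ℕ =>
          (∑ i ∈ Finset.range n, Real.log (p m i)) +
            ∑ i ∈ Finset.Ico n m, Real.log (1 - p m i))
        Filter.atTop Filter.atBot ∧
      ∃ C : ℝ, ∀ᶠ m : ℕ in Filter.atTop,
        (∑ i ∈ Finset.range n, Real.log (p m i)) +
            ∑ i ∈ Finset.Ico n m, Real.log (1 - p m i) ≤
          -(n : ℝ) * Real.log m + C :=
  stmt_8_general n hn γ x p hp01 hlogit
end
end

section
/- Fix 0 < n < m, covariates x_1, …, x_m ∈ ℝ^k, and |A| > 0, and suppose the design matrix with rows (1, x_i) has full column rank. Let β̂ maximize β ↦ l_ppm(β; (|A|/m)·1) and let γ̂ maximize γ ↦ l_ppm(γ − J_m; 1), so that γ̂ = β̂ + J_{|A|}. Define the fitted logistic probabilities p̂_i ∈ (0,1) by log(p̂_i/(1−p̂_i)) = γ̂_0 − log(m−n) + Σ_{j=1}^k x_{ij} γ̂_j. Then for every i, the fitted odds satisfy p̂_i/(1−p̂_i) = λ_i(β̂)·|A|/(m−n); in particular the fitted odds are proportional to the fitted point-process intensity λ_i(β̂), with a proportionality constant |A|/(m−n) that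 tends to 0 as m → ∞, so the fitted probabilities p̂_i depend on the number of pseudo-absences while the fitted intensity does not. -/
open Real Finset Filter

noncomputable section

/-!
Shifting the intercept by `log c` turns the unit-weight likelihood into the one with constant
weight `c`, up to an additive constant, so both `γ̂ - J_m` and `β̂ + J_{|A|/m}` maximize
`l_ppm(·; 1)`. That likelihood is strictly concave in the linear predictors
`η_i = β_0 + Σ_j x_{ij} β_j`, since `exp` is strictly convex, so the two maximizers have the same
predictors at all `m` points: `η_i(γ̂) = η_i(β̂) + log |A|`. Exponentiating the logit equation
gives the odds.
-/

def linPred {k : ℕ} (x : ℕ → Fin k → ℝ) (β : Fin (k + 1) → ℝ) (i : ℕ) : ℝ :=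
  β 0 + ∑ j : Fin k, x i j * β j.succ

section LinearPredictor

variable {k : ℕ} (x : ℕ → Fin k → ℝ) (i : ℕ)

theorem lam_eq_exp_linPred (β : Fin (k + 1) → ℝ) : lam x β i = exp (linPred x β i) := rfl

theorem linPred_add (β γ : Fin (k + 1) → ℝ) :
    linPred x (β + γ) i = linPred x β i + linPred x γ i := by
  simp only [linPred, Pi.add_apply, mul_add, sum_add_distrib]
  ring

theorem linPred_sub (β γ : Fin (k + 1) → ℝ) :
    linPred x (β - γ) i = linPred x β i - linPred x γ i := by
  simp only [linPred, Pi.sub_apply, mul_sub, sum_sub_distrib]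
  ring

theorem linPred_smul (a : ℝ) (β : Fin (k + 1) → ℝ) :
    linPred x (a • β) i = a * linPred x β i := by
  simp only [linPred, Pi.smul_apply, smul_eq_mul, mul_add, mul_sum]
  congr 1
  exact sum_congr rfl fun j _ => by ring

theorem linPred_Jvec (c : ℝ) : linPred x (Jvec c) i = log c := by
  simp [linPred, Jvec, Fin.succ_ne_zero]

end LinearPredictor

section Likelihood

variable {k : ℕ} (n m : ℕ) (x : ℕ → Fin k → ℝ)

theorem lppm_eq (w : ℕ → ℝ) (β : Fin (k + 1) → ℝ) :
    lppm n m x w β =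
      ∑ i ∈ range n, linPred x β i - ∑ i ∈ range m, w i * exp (linPred x β i) := by
  simp only [lppm, lam_eq_exp_linPred, log_exp]

theorem lppm_one_add_Jvec {c : ℝ} (hc : 0 < c) (β : Fin (k + 1) → ℝ) :
    lppm n m x (fun _ => 1) (β + Jvec c) = lppm n m x (fun _ => c) β + n * log c := by
  simp only [lppm_eq, linPred_add, linPred_Jvec, sum_add_distrib, exp_add, exp_log hc,
    sum_const, card_range, nsmul_eq_mul]
  rw [sub_add_eq_add_sub]
  congr 1
  exact sum_congr rfl fun i _ => by ring

theorem isMax_lppm_one_add_Jvec {c : ℝ} (hc : 0 < c) {βhat : Fin (k + 1) → ℝ}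
    (hβ : ∀ β, lppm n m x (fun _ => c) β ≤ lppm n m x (fun _ => c) βhat) (β : Fin (k + 1) → ℝ) :
    lppm n m x (fun _ => 1) β ≤ lppm n m x (fun _ => 1) (βhat + Jvec c) := by
  have h := hβ (β - Jvec c)
  rwa [← add_le_add_iff_right (n * log c), ← lppm_one_add_Jvec n m x hc,
    ← lppm_one_add_Jvec n m x hc, sub_add_cancel] at h

theorem lppm_midpoint_gt {w : ℕ → ℝ} (hw : ∀ i < m, 0 < w i) {u v : Fin (k + 1) → ℝ}
    (huv : ∃ i < m, linPred x u i ≠ linPred x v i) :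
    (lppm n m x w u + lppm n m x w v) / 2 < lppm n m x w ((1 / 2 : ℝ) • u + (1 / 2 : ℝ) • v) := by
  have hmid : ∀ i, linPred x ((1 / 2 : ℝ) • u + (1 / 2 : ℝ) • v) i =
      1 / 2 * linPred x u i + 1 / 2 * linPred x v i := fun i => by
    simp only [linPred_add, linPred_smul]
  have hexp_le : ∀ i ∈ range m, w i * exp (linPred x ((1 / 2 : ℝ) • u + (1 / 2 : ℝ) • v) i) ≤
      (w i * exp (linPred x u i) + w i * exp (linPred x v i)) / 2 := fun i hi => by
    rw [hmid]
    have := convexOn_exp.2 (Set.mem_univ (linPred x u i)) (Set.mem_univ (linPred x v i))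
      one_half_pos.le one_half_pos.le (add_halves 1)
    simp only [smul_eq_mul] at this
    nlinarith [hw i (mem_range.1 hi)]
  obtain ⟨i, hi, hne⟩ := huv
  have hexp_lt : w i * exp (linPred x ((1 / 2 : ℝ) • u + (1 / 2 : ℝ) • v) i) <
      (w i * exp (linPred x u i) + w i * exp (linPred x v i)) / 2 := by
    rw [hmid]
    have := strictConvexOn_exp.2 (Set.mem_univ (linPred x u i)) (Set.mem_univ (linPred x v i)) hne
      one_half_pos one_half_pos (add_halves 1)
    simp only [smul_eq_mul] at this
    nlinarith [hw i hi]
  have hsum := sum_lt_sum hexp_le ⟨i, mem_range.2 hi, hexp_lt⟩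
  simp only [lppm_eq, hmid, ← sum_div, sum_add_distrib, ← mul_sum] at hsum ⊢
  linarith

theorem linPred_eq_of_isMax_lppm {w : ℕ → ℝ} (hw : ∀ i < m, 0 < w i) {u v : Fin (k + 1) → ℝ}
    (hu : ∀ β, lppm n m x w β ≤ lppm n m x w u) (hv : ∀ β, lppm n m x w β ≤ lppm n m x w v) :
    ∀ i < m, linPred x u i = linPred x v i := by
  by_contra! huv
  have := lppm_midpoint_gt n m x hw huv
  linarith [hu v, hv u, hu ((1 / 2 : ℝ) • u + (1 / 2 : ℝ) • v)]

end Likelihood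

theorem stmt_13_general {k : ℕ} (n m : ℕ) (hnm : n < m)
    (x : ℕ → Fin k → ℝ) (A : ℝ) (hA : 0 < A)
    (γhat βhat : Fin (k + 1) → ℝ)
    (hγ : ∀ γ : Fin (k + 1) → ℝ,
      lppm n m x (fun _ => 1) (γ - Jvec (m : ℝ)) ≤
        lppm n m x (fun _ => 1) (γhat - Jvec (m : ℝ)))
    (hβ : ∀ β : Fin (k + 1) → ℝ,
      lppm n m x (fun _ => A / m) β ≤ lppm n m x (fun _ => A / m) βhat)
    (phat : ℕ → ℝ)
    (hp01 : ∀ i < m, phat i ∈ Set.Ioo (0 : ℝ) 1)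
    (hlogit : ∀ i < m,
      Real.log (phat i / (1 - phat i)) =
        γhat 0 - Real.log ((m : ℝ) - n) + ∑ j : Fin k, x i j * γhat j.succ) :
    (∀ i < m, phat i / (1 - phat i) = lam x βhat i * A / ((m : ℝ) - n)) ∧
      Filter.Tendsto (fun m' : ℕ => A / ((m' : ℝ) - n)) Filter.atTop (nhds 0) := by
  have hm : (0 : ℝ) < m := by exact_mod_cast (Nat.zero_le n).trans_lt hnm
  have hmn : (0 : ℝ) < m - n := sub_pos.2 (by exact_mod_cast hnm)
  have hγ' : ∀ β, lppm n m x (fun _ => 1) β ≤ lppm n m x (fun _ => 1) (γhat - Jvec (m : ℝ)) :=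
    fun β => add_sub_cancel_right β (Jvec (m : ℝ)) ▸ hγ (β + Jvec (m : ℝ))
  have hpred : ∀ i < m, linPred x γhat i = linPred x βhat i + log A := fun i hi => by
    have h := linPred_eq_of_isMax_lppm n m x (fun _ _ => one_pos) hγ'
      (isMax_lppm_one_add_Jvec n m x (div_pos hA hm) hβ) i hi
    rw [linPred_sub, linPred_add, linPred_Jvec, linPred_Jvec, log_div hA.ne' hm.ne'] at h
    linarith
  refine ⟨fun i hi => ?_, tendsto_const_nhds.div_atTop ?_⟩
  · obtain ⟨hp0, hp1⟩ := hp01 i hi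
    calc phat i / (1 - phat i) = exp (log (phat i / (1 - phat i))) :=
          (exp_log (div_pos hp0 (sub_pos.2 hp1))).symm
      _ = exp (linPred x βhat i + log A - log (m - n)) := by
          rw [hlogit i hi, ← hpred i hi, linPred]
          ring_nf
      _ = lam x βhat i * A / (m - n) := by
          rw [exp_sub, exp_add, exp_log hA, exp_log hmn, lam_eq_exp_linPred]
  · exact tendsto_atTop_add_const_right _ _ tendsto_natCast_atTop_atTop

/-- Let `β̂` maximize the equally-weighted likelihood `β ↦ l_ppm(β; (|A|/m)·1)` and `γ̂`
maximize the unit-weight likelihood `γ ↦ l_ppm(γ − J_m; 1)` (so `γ̂ = β̂ + J_{|A|}`),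
and define the fitted logistic probabilities `p̂_i ∈ (0,1)` by
`log(p̂_i/(1−p̂_i)) = γ̂_0 − log(m−n) + Σ_j x_{ij} γ̂_j`.  Then for every `i` the fitted
odds satisfy `p̂_i/(1−p̂_i) = λ_i(β̂)·|A|/(m−n)`: they are proportional to the fitted
point-process intensity, with proportionality constant `|A|/(m−n)` tending to `0` as
`m → ∞`. -/
theorem stmt_13 {k : ℕ} (n m : ℕ) (hn : 0 < n) (hnm : n < m)
    (x : ℕ → Fin k → ℝ) (A : ℝ) (hA : 0 < A)
    (hrank : (designMatrix m x).rank = k + 1)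
    (γhat βhat : Fin (k + 1) → ℝ)
    (hγ : ∀ γ : Fin (k + 1) → ℝ,
      lppm n m x (fun _ => 1) (γ - Jvec (m : ℝ)) ≤
        lppm n m x (fun _ => 1) (γhat - Jvec (m : ℝ)))
    (hβ : ∀ β : Fin (k + 1) → ℝ,
      lppm n m x (fun _ => A / m) β ≤ lppm n m x (fun _ => A / m) βhat)
    (phat : ℕ → ℝ)
    (hp01 : ∀ i < m, phat i ∈ Set.Ioo (0 : ℝ) 1)
    (hlogit : ∀ i < m,
      Real.log (phat i / (1 - phat i)) =
        γhat 0 - Real.log ((m : ℝ) - n) + ∑ j : Fin k, x i j * γhat j.succ) :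
    (∀ i < m, phat i / (1 - phat i) = lam x βhat i * A / ((m : ℝ) - n)) ∧
      Filter.Tendsto (fun m' : ℕ => A / ((m' : ℝ) - n)) Filter.atTop (nhds 0) :=
  stmt_13_general n m hnm x A hA γhat βhat hγ hβ phat hp01 hlogit
end
end
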